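/- The presented group on six generators x₁, …, x₆ with defining relations x₆x₅x₄x₃x₂x₁ = e, x₄ = x₅, x₁x₂ = x₂x₁, x₂x₁x₂⁻¹x₅x₃ = x₅x₃x₂x₁x₂⁻¹, x₅x₃x₂x₁x₂⁻¹x₅x₃ = x₃x₅x₃x₂x₁x₂⁻¹x₅, x₁x₄ = x₄x₁, x₁x₆ = x₆x₁, x₂ = x₅x₃x₅⁻¹, x₂ = x₆x₄x₃x₄⁻¹x₆⁻¹, (x₆x₅x₄x₅⁻¹x₆⁻¹x₆x₅x₃x₅⁻¹)² = (x₅x₃x₅⁻¹x₆x₅x₄x₅⁻¹x₆⁻¹x₆)² = (x₆x₅x₃x₅⁻¹x₆x₅x₄x₅⁻¹x₆⁻¹)², x₄ = x₆x₅x₆⁻¹ is isomorphic to the direct product of ℤ with the presented group ⟨a, b | (ab)² = (ba)²⟩. -/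

import Mathlib

namespace Stmt7

/-- Generators `x₁, …, x₆` of the free group, indexed by `0, …, 5`. -/
def x (i : Fin 6) : FreeGroup (Fin 6) := FreeGroup.of i

/-- `A = x₆x₅x₄x₅⁻¹x₆⁻¹x₆x₅x₃x₅⁻¹`. -/
def A : FreeGroup (Fin 6) :=
  x 5 * x 4 * x 3 * (x 4)⁻¹ * (x 5)⁻¹ * x 5 * x 4 * x 2 * (x 4)⁻¹

/-- `B = x₅x₃x₅⁻¹x₆x₅x₄x₅⁻¹x₆⁻¹x₆`. -/
def B : FreeGroup (Fin 6) :=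
  x 4 * x 2 * (x 4)⁻¹ * x 5 * x 4 * x 3 * (x 4)⁻¹ * (x 5)⁻¹ * x 5

/-- `C = x₆x₅x₃x₅⁻¹x₆x₅x₄x₅⁻¹x₆⁻¹`. -/
def C : FreeGroup (Fin 6) :=
  x 5 * x 4 * x 2 * (x 4)⁻¹ * x 5 * x 4 * x 3 * (x 4)⁻¹ * (x 5)⁻¹

/-- The relators corresponding to the defining relations. -/
def rels : Set (FreeGroup (Fin 6)) :=
  { x 5 * x 4 * x 3 * x 2 * x 1 * x 0,
    x 3 * (x 4)⁻¹,
    x 0 * x 1 * (x 1 * x 0)⁻¹,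
    (x 1 * x 0 * (x 1)⁻¹ * x 4 * x 2) * (x 4 * x 2 * x 1 * x 0 * (x 1)⁻¹)⁻¹,
    (x 4 * x 2 * x 1 * x 0 * (x 1)⁻¹ * x 4 * x 2) *
      (x 2 * x 4 * x 2 * x 1 * x 0 * (x 1)⁻¹ * x 4)⁻¹,
    x 0 * x 3 * (x 3 * x 0)⁻¹,
    x 0 * x 5 * (x 5 * x 0)⁻¹,
    x 1 * (x 4 * x 2 * (x 4)⁻¹)⁻¹,
    x 1 * (x 5 * x 3 * x 2 * (x 3)⁻¹ * (x 5)⁻¹)⁻¹,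
    A ^ 2 * (B ^ 2)⁻¹,
    B ^ 2 * (C ^ 2)⁻¹,
    x 3 * (x 5 * x 4 * (x 5)⁻¹)⁻¹ }

/-- The single relator `(ab)²((ba)²)⁻¹` of the presentation `⟨a, b | (ab)² = (ba)²⟩`. -/
def rels' : Set (FreeGroup (Fin 2)) :=
  {(FreeGroup.of 0 * FreeGroup.of 1) ^ 2 * ((FreeGroup.of 1 * FreeGroup.of 0) ^ 2)⁻¹}

/-! Write `gen i` for the image of `x_{i+1}` in `G = ⟨x₁, …, x₆ | …⟩`. In `G` the relations force
`x₄ = x₅`, `x₂ = x₅x₃x₅⁻¹`, `(x₃x₅)² = (x₅x₃)²` and `x₆ = x₁⁻¹(x₅x₃)⁻²`, and make `x₁` commute with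
`x₃` and `x₅`; so `G` is generated by the central element `x₁` and by `x₃, x₅`, which satisfy the
relation of `⟨a, b | (ab)² = (ba)²⟩`. Conversely `x₁ ↦ (1, e)`, `x₂ ↦ (0, bab⁻¹)`, `x₃ ↦ (0, a)`,
`x₄, x₅ ↦ (0, b)`, `x₆ ↦ (-1, (ba)⁻²)` respects all twelve relations, because `(ba)²` is central
in `⟨a, b | (ab)² = (ba)²⟩`; the two homomorphisms are mutually inverse on generators. -/

theorem MonoidHom.prod_ext {M N P : Type*} [Monoid M] [Monoid N] [Monoid P] {f g : M × N →* P}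
    (hl : f.comp (MonoidHom.inl M N) = g.comp (MonoidHom.inl M N))
    (hr : f.comp (MonoidHom.inr M N) = g.comp (MonoidHom.inr M N)) : f = g := by
  ext p
  rw [← Prod.fst_mul_snd p]
  simpa [← map_mul] using
    congr_arg₂ (· * ·) (DFunLike.congr_fun hl p.1) (DFunLike.congr_fun hr p.2)

theorem inv_mul_sq_of_commute {K : Type*} [Group K] {z w : K} (hzw : Commute z w)
    (hw : w ^ 2 = z) : (z⁻¹ * w) ^ 2 = z⁻¹ := by
  rw [hzw.inv_left.mul_pow, hw]
  group

section OneRelator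

variable {K : Type*} [Group K] {a b : K}

theorem commute_sq_mul_left (h : (a * b) ^ 2 = (b * a) ^ 2) : Commute ((b * a) ^ 2) a :=
  calc (b * a) ^ 2 * a = (a * b) ^ 2 * a := by rw [h]
    _ = a * (b * a) ^ 2 := by simp only [pow_two, mul_assoc]

theorem commute_sq_mul_right (h : (a * b) ^ 2 = (b * a) ^ 2) : Commute ((b * a) ^ 2) b :=
  calc (b * a) ^ 2 * b = b * (a * b) ^ 2 := by simp only [pow_two, mul_assoc]
    _ = b * (b * a) ^ 2 := by rw [h]

theorem commute_sq_mul_conj (h : (a * b) ^ 2 = (b * a) ^ 2) :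
    Commute ((b * a) ^ 2) (b * a * b⁻¹) :=
  ((commute_sq_mul_right h).mul_right (commute_sq_mul_left h)).mul_right
    (commute_sq_mul_right h).inv_right

abbrev pairImage (a b : K) : Fin 6 → K := ![1, b * a * b⁻¹, a, b, b, ((b * a) ^ 2)⁻¹]

theorem lift_pairImage_A :
    FreeGroup.lift (pairImage a b) A = ((b * a) ^ 2)⁻¹ * (b * (b * a) * b⁻¹) := by
  simp only [A, x, map_mul, map_inv, FreeGroup.lift_apply_of, Matrix.cons_val]
  group

theorem lift_pairImage_B (h : (a * b) ^ 2 = (b * a) ^ 2) :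
    FreeGroup.lift (pairImage a b) B = ((b * a) ^ 2)⁻¹ * (b * a) := by
  simp only [B, x, map_mul, map_inv, FreeGroup.lift_apply_of, Matrix.cons_val]
  calc _ = b * a * b⁻¹ * ((b * a) ^ 2)⁻¹ * b := by group
    _ = _ := by rw [← (commute_sq_mul_conj h).inv_left.eq]; group

theorem lift_pairImage_C (h : (a * b) ^ 2 = (b * a) ^ 2) :
    FreeGroup.lift (pairImage a b) C = ((b * a) ^ 2)⁻¹ * (b * a) := by
  simp only [C, x, map_mul, map_inv, FreeGroup.lift_apply_of, Matrix.cons_val]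
  calc _ = ((b * a) ^ 2)⁻¹ * (b * a * b⁻¹) * (((b * a) ^ 2)⁻¹ * b * (b * a) ^ 2) := by
        simp only [pow_two]; group
    _ = _ := by rw [(commute_sq_mul_right h).inv_mul_cancel]; group

theorem lift_pairImage_rels (h : (a * b) ^ 2 = (b * a) ^ 2) :
    ∀ r ∈ rels, FreeGroup.lift (pairImage a b) r = 1 := by
  have hzb := commute_sq_mul_right h
  have hzba : Commute ((b * a) ^ 2) (b * a) := hzb.mul_right (commute_sq_mul_left h)
  have hzA : Commute ((b * a) ^ 2) (b * (b * a) * b⁻¹) :=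
    (hzb.mul_right hzba).mul_right hzb.inv_right
  have hA : (b * (b * a) * b⁻¹) ^ 2 = (b * a) ^ 2 := by rw [conj_pow, hzb.symm.mul_inv_cancel]
  intro r hr
  simp only [rels, Set.mem_insert_iff, Set.mem_singleton_iff] at hr
  rcases hr with rfl | rfl | rfl | rfl | rfl | rfl | rfl | rfl | rfl | rfl | rfl | rfl <;>
    simp only [map_mul, map_inv, map_pow, lift_pairImage_A, lift_pairImage_B h,
      lift_pairImage_C h, x, FreeGroup.lift_apply_of, Matrix.cons_val]
  · calc _ = ((b * a) ^ 2)⁻¹ * (b * (b * a) ^ 2 * b⁻¹) := by simp only [pow_two]; group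
      _ = 1 := by rw [hzb.symm.mul_inv_cancel, inv_mul_cancel]
  · group
  · group
  · group
  · calc _ = (b * a) ^ 2 * ((a * b) ^ 2)⁻¹ := by simp only [pow_two]; group
      _ = 1 := by rw [h, mul_inv_cancel]
  · group
  · group
  · group
  · calc _ = b * a * b⁻¹ * (((b * a) ^ 2)⁻¹ * (b * a * b⁻¹) * (b * a) ^ 2)⁻¹ := by group
      _ = 1 := by rw [(commute_sq_mul_conj h).inv_mul_cancel, mul_inv_cancel]
  · rw [inv_mul_sq_of_commute hzA hA, inv_mul_sq_of_commute hzba rfl, mul_inv_cancel]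
  · rw [mul_inv_cancel]
  · calc _ = b * (((b * a) ^ 2)⁻¹ * b * (b * a) ^ 2)⁻¹ := by group
      _ = 1 := by rw [hzb.inv_mul_cancel, mul_inv_cancel]

end OneRelator

def intImage : Fin 6 → Multiplicative ℤ := ![.ofAdd 1, 1, 1, 1, 1, .ofAdd (-1)]

theorem lift_intImage_rels : ∀ r ∈ rels, FreeGroup.lift intImage r = 1 := by
  intro r hr
  simp only [rels, Set.mem_insert_iff, Set.mem_singleton_iff] at hr
  rcases hr with rfl | rfl | rfl | rfl | rfl | rfl | rfl | rfl | rfl | rfl | rfl | rfl <;>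
    simp [A, B, C, x, intImage]

abbrev gen (i : Fin 6) : PresentedGroup rels := PresentedGroup.of i

-- `PresentedGroup.mk rels` of a concrete word reduces to the product of the `gen i` in any
-- bracketing, so each defining relation below is read off its relator definitionally.
theorem gen_five_mul_eq_one : gen 5 * gen 4 * gen 3 * gen 2 * gen 1 * gen 0 = 1 :=
  PresentedGroup.one_of_mem (x := x 5 * x 4 * x 3 * x 2 * x 1 * x 0) (by simp [rels])

theorem gen_three_eq : gen 3 = gen 4 :=
  PresentedGroup.mk_eq_mk_of_mul_inv_mem (x := x 3) (y := x 4) (by simp [rels])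

theorem commute_gen_zero_gen_one : Commute (gen 0) (gen 1) :=
  PresentedGroup.mk_eq_mk_of_mul_inv_mem (x := x 0 * x 1) (y := x 1 * x 0) (by simp [rels])

theorem commute_conj_gen_zero_gen_four_mul_gen_two :
    Commute (gen 1 * gen 0 * (gen 1)⁻¹) (gen 4 * gen 2) :=
  PresentedGroup.mk_eq_mk_of_mul_inv_mem (x := x 1 * x 0 * (x 1)⁻¹ * x 4 * x 2)
    (y := x 4 * x 2 * x 1 * x 0 * (x 1)⁻¹) (by simp [rels])

theorem gen_four_mul_gen_two_mul_conj_gen_zero :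
    gen 4 * gen 2 * (gen 1 * gen 0 * (gen 1)⁻¹) * (gen 4 * gen 2) =
      gen 2 * gen 4 * gen 2 * (gen 1 * gen 0 * (gen 1)⁻¹) * gen 4 :=
  PresentedGroup.mk_eq_mk_of_mul_inv_mem (x := x 4 * x 2 * x 1 * x 0 * (x 1)⁻¹ * x 4 * x 2)
    (y := x 2 * x 4 * x 2 * x 1 * x 0 * (x 1)⁻¹ * x 4) (by simp [rels])

theorem commute_gen_zero_gen_three : Commute (gen 0) (gen 3) :=
  PresentedGroup.mk_eq_mk_of_mul_inv_mem (x := x 0 * x 3) (y := x 3 * x 0) (by simp [rels])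

theorem gen_one_eq : gen 1 = gen 4 * gen 2 * (gen 4)⁻¹ :=
  PresentedGroup.mk_eq_mk_of_mul_inv_mem (x := x 1) (y := x 4 * x 2 * (x 4)⁻¹) (by simp [rels])

theorem conj_gen_one_gen_zero : gen 1 * gen 0 * (gen 1)⁻¹ = gen 0 :=
  commute_gen_zero_gen_one.symm.mul_inv_cancel

theorem commute_gen_zero_gen_four : Commute (gen 0) (gen 4) :=
  gen_three_eq ▸ commute_gen_zero_gen_three

theorem commute_gen_zero_gen_two : Commute (gen 0) (gen 2) := by
  have h := conj_gen_one_gen_zero ▸ commute_conj_gen_zero_gen_four_mul_gen_two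
  simpa using commute_gen_zero_gen_four.inv_right.mul_right h

theorem sq_gen_two_mul_gen_four : (gen 2 * gen 4) ^ 2 = (gen 4 * gen 2) ^ 2 := by
  have h := conj_gen_one_gen_zero ▸ gen_four_mul_gen_two_mul_conj_gen_zero
  have h42 := conj_gen_one_gen_zero ▸ commute_conj_gen_zero_gen_four_mul_gen_two
  apply mul_right_cancel (b := gen 0)
  calc (gen 2 * gen 4) ^ 2 * gen 0 = gen 2 * gen 4 * gen 2 * gen 0 * gen 4 := by
        simp only [pow_two, mul_assoc, commute_gen_zero_gen_four.eq]
    _ = gen 4 * gen 2 * gen 0 * (gen 4 * gen 2) := h.symm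
    _ = (gen 4 * gen 2) ^ 2 * gen 0 := by
        rw [mul_assoc _ (gen 0), h42.eq]; simp only [pow_two, mul_assoc]

theorem gen_five_eq : gen 5 = (gen 0)⁻¹ * ((gen 4 * gen 2) ^ 2)⁻¹ := by
  have h := gen_five_mul_eq_one
  rw [gen_three_eq, gen_one_eq] at h
  calc gen 5 = (gen 4 * gen 4 * gen 2 * (gen 4 * gen 2 * (gen 4)⁻¹) * gen 0)⁻¹ :=
        eq_inv_of_mul_eq_one_left (by simpa only [mul_assoc] using h)
    _ = (gen 4 * (gen 4 * gen 2) ^ 2 * (gen 4)⁻¹ * gen 0)⁻¹ := by simp only [pow_two]; group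
    _ = (gen 4 * (gen 2 * gen 4) ^ 2 * (gen 4)⁻¹ * gen 0)⁻¹ := by rw [← sq_gen_two_mul_gen_four]
    _ = (gen 0)⁻¹ * ((gen 4 * gen 2) ^ 2)⁻¹ := by simp only [pow_two]; group

abbrev gen' (i : Fin 2) : PresentedGroup rels' := PresentedGroup.of i

theorem sq_gen'_zero_mul_gen'_one : (gen' 0 * gen' 1) ^ 2 = (gen' 1 * gen' 0) ^ 2 :=
  PresentedGroup.mk_eq_mk_of_mul_inv_mem rfl

def toProd : PresentedGroup rels →* Multiplicative ℤ × PresentedGroup rels' :=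
  (PresentedGroup.toGroup lift_intImage_rels).prod
    (PresentedGroup.toGroup (lift_pairImage_rels sq_gen'_zero_mul_gen'_one))

theorem lift_gen_two_gen_four_rels' : ∀ r ∈ rels', FreeGroup.lift ![gen 2, gen 4] r = 1 := by
  rintro _ rfl
  simpa [mul_inv_eq_one] using sq_gen_two_mul_gen_four

def ofRels' : PresentedGroup rels' →* PresentedGroup rels :=
  PresentedGroup.toGroup lift_gen_two_gen_four_rels'

theorem commute_gen_zero_ofRels' (w : PresentedGroup rels') :
    Commute (gen 0) (ofRels' w) := by
  refine (Subgroup.mem_centralizer_singleton_iff.mp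
    (PresentedGroup.generated_by rels' ((Subgroup.centralizer {gen 0}).comap ofRels') ?_ w)).symm
  intro i
  fin_cases i
  · exact Subgroup.mem_centralizer_singleton_iff.mpr commute_gen_zero_gen_two.symm
  · exact Subgroup.mem_centralizer_singleton_iff.mpr commute_gen_zero_gen_four.symm

theorem commute_zpowersHom_ofRels' (m : Multiplicative ℤ) (w : PresentedGroup rels') :
    Commute (zpowersHom _ (gen 0) m) (ofRels' w) :=
  (commute_gen_zero_ofRels' w).zpow_left m.toAdd

def ofProd : Multiplicative ℤ × PresentedGroup rels' →* PresentedGroup rels :=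
  (zpowersHom _ (gen 0)).noncommCoprod ofRels' commute_zpowersHom_ofRels'

theorem ofProd_comp_toProd : ofProd.comp toProd = MonoidHom.id _ := by
  refine PresentedGroup.ext fun i => ?_
  fin_cases i <;> simp [ofProd, toProd, ofRels', intImage, gen_one_eq, gen_three_eq, gen_five_eq]

theorem toProd_comp_ofProd : toProd.comp ofProd = MonoidHom.id _ := by
  refine MonoidHom.prod_ext ?_ ?_ <;> rw [MonoidHom.comp_assoc, ofProd]
  · rw [MonoidHom.noncommCoprod_comp_inl]
    exact MonoidHom.ext_mint (by simp [toProd, intImage])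
  · rw [MonoidHom.noncommCoprod_comp_inr]
    refine PresentedGroup.ext fun i => ?_
    fin_cases i <;> simp [toProd, ofRels', intImage]

theorem presentation_iso :
    Nonempty (PresentedGroup rels ≃* (Multiplicative ℤ × PresentedGroup rels')) :=
  ⟨toProd.toMulEquiv ofProd ofProd_comp_toProd toProd_comp_ofProd⟩

end Stmt7
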